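/- Let x ≥ 2 and let Q be an even integer with 2 ≤ Q < x. Set F(Q) = Σ_{Q/2<q≤Q} φ(q) and F*ₓ(Q) = Σ_{Q/2<q≤Q} φ*ₓ(q), and assume F*ₓ(Q) > 0 and π(x) > 0. Let X be the probability distribution on the primes p ≤ x given by Pr[X = p] = (1/F*ₓ(Q))·Σ_{Q/2<q≤Q, p∤q} 1/π(x;q, p mod q) (note π(x;q,p mod q) ≥ 1 whenever p ∤ q, since p itself is counted; this defines a probability distribution). Then the statistical distance to uniform satisfies Δ₁(X) ≤ (1/(F*ₓ(Q)·π(x))) · ( Q·√(F(Q))·√(Σ_{Q/2<q≤Q} Σ_{a∈(ℤ/qℤ)^*} (π(x;q,a) − π(x)/φ(q))²) + (F(Q) − F*ₓ(Q))·π(x) + Σ_{Q/2<q≤Q} ω(q)·φ*ₓ(q) ). -/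

import Mathlib

/-- The finite set of primes `p ≤ x`. -/
def primesUpTo (x : ℕ) : Finset ℕ := (Finset.range (x + 1)).filter Nat.Prime

/-- `π(x)`, the number of primes `≤ x`. -/
def primePi (x : ℕ) : ℕ := (primesUpTo x).card

/-- `π(x;q,a)`, the number of primes `p ≤ x` with `p ≡ a (mod q)`. -/
def primePiMod (x q a : ℕ) : ℕ :=
  ((primesUpTo x).filter (fun p => p % q = a % q)).card

/-- Canonical representatives of the invertible classes `(ℤ/qℤ)^*`. -/
def residues (q : ℕ) : Finset ℕ := (Finset.range q).filter (fun a => Nat.Coprime a q)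

/-- `φ*ₓ(q) = #{a ∈ (ℤ/qℤ)^* : π(x;q,a) ≠ 0}`. -/
def phiStar (x q : ℕ) : ℕ := ((residues q).filter (fun a => primePiMod x q a ≠ 0)).card

/-!
Write `F*ₓ(Q) · (Pr[X = p] − 1/π(x))` as `∑_q (w_q(p) − φ*ₓ(q)/π(x))`, where `w_q(p)` is the
summand of modulus `q`, and bound each modulus separately. Primes dividing `q` contribute at
most `ω(q) φ*ₓ(q)/π(x)`. The others are grouped by their residue class `a`, where the class
contributes `π(x;q,a) · |1/π(x;q,a) − φ*ₓ(q)/π(x)|`; splitting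
`1 − m φ*ₓ(q)/π(x) = (φ(q)/π(x)) (π(x)/φ(q) − m) + (m/π(x)) (φ(q) − φ*ₓ(q))` separates the
deviation `|π(x;q,a) − π(x)/φ(q)|` from the classes missed by the primes. Cauchy–Schwarz, once
over the classes and once over the moduli, together with `φ(q) ≤ Q`, gives the bound.
-/

open Finset

lemma card_residues (q : ℕ) : #(residues q) = q.totient := by
  rw [Nat.totient, residues]
  simp only [Nat.coprime_comm]

lemma phiStar_le_totient (x q : ℕ) : phiStar x q ≤ q.totient :=
  card_residues q ▸ card_le_card (filter_subset _ _)

lemma mod_mem_residues {p q : ℕ} (hp : p.Prime) (hq : 0 < q) (hpq : ¬ p ∣ q) :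
    p % q ∈ residues q := by
  simp only [residues, mem_filter, mem_range, ZMod.coprime_mod_iff_coprime]
  exact ⟨Nat.mod_lt _ hq, hp.coprime_iff_not_dvd.2 hpq⟩

lemma filter_not_dvd_and_mod_eq {x q a : ℕ} (ha : a ∈ residues q) :
    {p ∈ primesUpTo x | ¬ p ∣ q ∧ p % q = a} = {p ∈ primesUpTo x | p % q = a % q} := by
  simp only [residues, mem_filter, mem_range] at ha
  rw [Nat.mod_eq_of_lt ha.1]
  refine filter_congr fun p hp ↦ and_iff_right_of_imp fun hpa ↦ ?_
  have hp : p.Prime := (mem_filter.1 hp).2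
  rw [← hp.coprime_iff_not_dvd, ← ZMod.coprime_mod_iff_coprime, hpa]
  exact ha.2

lemma sum_not_dvd_comp_mod {x q : ℕ} (hq : 0 < q) (f : ℕ → ℝ) :
    ∑ p ∈ primesUpTo x with ¬ p ∣ q, f (p % q) =
      ∑ a ∈ residues q, (primePiMod x q a : ℝ) * f a := by
  rw [← sum_fiberwise_of_maps_to (t := residues q) (g := (· % q))
    fun p hp ↦ by
      simp only [primesUpTo, mem_filter] at hp
      exact mod_mem_residues hp.1.2 hq hp.2]
  refine sum_congr rfl fun a ha ↦ ?_
  rw [sum_congr rfl fun p hp ↦ by rw [(mem_filter.1 hp).2], sum_const, nsmul_eq_mul,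
    filter_filter, filter_not_dvd_and_mod_eq ha, primePiMod]

lemma sum_primePiMod_le (x : ℕ) {q : ℕ} (hq : 0 < q) :
    ∑ a ∈ residues q, (primePiMod x q a : ℝ) ≤ primePi x := by
  have h := sum_not_dvd_comp_mod (x := x) hq fun _ ↦ 1
  simp only [mul_one, sum_const, nsmul_eq_mul] at h
  rw [← h, primePi]
  exact_mod_cast card_le_card (filter_subset _ _)

lemma card_filter_dvd_le (x : ℕ) {q : ℕ} (hq : q ≠ 0) :
    #{p ∈ primesUpTo x | p ∣ q} ≤ #q.primeFactors :=
  card_le_card fun p hp ↦ by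
    simp only [primesUpTo, mem_filter] at hp
    exact Nat.mem_primeFactors.2 ⟨hp.1.2, hp.2, hq⟩

lemma sum_abs_le_sqrt_card_mul_sqrt {ι : Type*} (s : Finset ι) (v : ι → ℝ) :
    ∑ i ∈ s, |v i| ≤ √(#s) * √(∑ i ∈ s, v i ^ 2) := by
  simpa using Real.sum_mul_le_sqrt_mul_sqrt s (fun _ ↦ 1) (fun i ↦ |v i|)

lemma sum_mul_sqrt_mul_sqrt_le {ι : Type*} (s : Finset ι) {a b c : ι → ℝ} {M : ℝ}
    (ha : ∀ i ∈ s, 0 ≤ a i) (haM : ∀ i ∈ s, a i ≤ M) (hb : ∀ i, 0 ≤ b i)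
    (hc : ∀ i, 0 ≤ c i) :
    ∑ i ∈ s, a i * (√(b i) * √(c i)) ≤ M * (√(∑ i ∈ s, b i) * √(∑ i ∈ s, c i)) :=
  calc ∑ i ∈ s, a i * (√(b i) * √(c i)) ≤ ∑ i ∈ s, M * (√(b i) * √(c i)) :=
        sum_le_sum fun i hi ↦ mul_le_mul_of_nonneg_right (haM i hi) (by positivity)
    _ ≤ M * (√(∑ i ∈ s, b i) * √(∑ i ∈ s, c i)) := by
        rw [← mul_sum]
        rcases s.eq_empty_or_nonempty with rfl | ⟨i, hi⟩
        · simp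
        exact mul_le_mul_of_nonneg_left (Real.sum_sqrt_mul_sqrt_le s hb hc)
          ((ha i hi).trans (haM i hi))

lemma mul_abs_inv_sub_div_le {m N φ φs : ℝ} (hm : 0 ≤ m) (hN : 0 < N) (hφ : 0 < φ)
    (hφs : φs ≤ φ) :
    m * |1 / m - φs / N| ≤ φ / N * |m - N / φ| + m / N * (φ - φs) := by
  rcases hm.eq_or_lt with rfl | hm
  · simp only [zero_mul, zero_div, zero_sub, abs_neg]
    positivity
  calc m * |1 / m - φs / N| = |φ / N * (N / φ - m) + m / N * (φ - φs)| := by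
        rw [← abs_of_pos hm, ← abs_mul, abs_of_pos hm]
        congr 1
        field_simp
        ring
    _ ≤ φ / N * |m - N / φ| + m / N * (φ - φs) := by
        refine (abs_add_le _ _).trans_eq ?_
        rw [abs_mul, abs_mul, abs_sub_comm, abs_of_pos (by positivity),
          abs_of_pos (by positivity : 0 < m / N), abs_of_nonneg (sub_nonneg.2 hφs)]

/-- The summand of modulus `q` in `F*ₓ(Q) · Pr[X = p]`. -/
noncomputable def modulusWeight (x q p : ℕ) : ℝ :=
  if p ∣ q then 0 else 1 / (primePiMod x q (p % q) : ℝ)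

noncomputable def sqDeviation (x q : ℕ) : ℝ :=
  ∑ a ∈ residues q, ((primePiMod x q a : ℝ) - (primePi x : ℝ) / (q.totient : ℝ)) ^ 2

lemma sqDeviation_nonneg (x q : ℕ) : 0 ≤ sqDeviation x q := by
  unfold sqDeviation; positivity

lemma sum_dvd_abs_modulusWeight_sub_le (x : ℕ) {q : ℕ} (hq : q ≠ 0) {c : ℝ} (hc : 0 ≤ c) :
    ∑ p ∈ primesUpTo x with p ∣ q, |modulusWeight x q p - c| ≤ #q.primeFactors * c := by
  rw [sum_congr rfl fun p hp ↦ by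
    rw [modulusWeight, if_pos (mem_filter.1 hp).2, zero_sub, abs_neg, abs_of_nonneg hc],
    sum_const, nsmul_eq_mul]
  exact mul_le_mul_of_nonneg_right (by exact_mod_cast card_filter_dvd_le x hq) hc

lemma sum_not_dvd_abs_modulusWeight_sub_le {x q : ℕ} (hq : 0 < q) (hx : 0 < primePi x) :
    ∑ p ∈ primesUpTo x with ¬ p ∣ q, |modulusWeight x q p - phiStar x q / primePi x| ≤
      q.totient / primePi x * (√(q.totient : ℝ) * √(sqDeviation x q)) +
        (q.totient - phiStar x q) := by
  have hN : (0 : ℝ) < primePi x := by exact_mod_cast hx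
  have hφ : (0 : ℝ) < q.totient := by exact_mod_cast Nat.totient_pos.2 hq
  have hφs : (phiStar x q : ℝ) ≤ q.totient := by exact_mod_cast phiStar_le_totient x q
  rw [sum_congr rfl fun p hp ↦ by rw [modulusWeight, if_neg (mem_filter.1 hp).2],
    sum_not_dvd_comp_mod hq fun a ↦ |1 / (primePiMod x q a : ℝ) - phiStar x q / primePi x|]
  calc _ ≤ ∑ a ∈ residues q,
          (q.totient / primePi x * |(primePiMod x q a : ℝ) - primePi x / q.totient| +
            primePiMod x q a / primePi x * (q.totient - phiStar x q)) :=
        sum_le_sum fun a _ ↦ mul_abs_inv_sub_div_le (Nat.cast_nonneg _) hN hφ hφs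
    _ ≤ q.totient / primePi x * (√(q.totient : ℝ) * √(sqDeviation x q)) +
        (q.totient - phiStar x q) := by
      rw [sum_add_distrib, ← mul_sum, ← sum_mul, ← sum_div]
      gcongr
      · simpa [card_residues, sqDeviation] using sum_abs_le_sqrt_card_mul_sqrt (residues q)
          fun a ↦ (primePiMod x q a : ℝ) - primePi x / q.totient
      · exact mul_le_of_le_one_left (sub_nonneg.2 hφs)
          ((div_le_one hN).2 (sum_primePiMod_le x hq))

lemma sum_abs_modulusWeight_sub_le {x q : ℕ} (hq : 0 < q) (hx : 0 < primePi x) :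
    ∑ p ∈ primesUpTo x, |modulusWeight x q p - phiStar x q / primePi x| ≤
      #q.primeFactors * (phiStar x q / primePi x) +
        q.totient / primePi x * (√(q.totient : ℝ) * √(sqDeviation x q)) +
          (q.totient - phiStar x q) := by
  rw [← sum_filter_add_sum_filter_not _ (· ∣ q), add_assoc]
  exact add_le_add (sum_dvd_abs_modulusWeight_sub_le x hq.ne' (by positivity))
    (sum_not_dvd_abs_modulusWeight_sub_le hq hx)

lemma mul_sum_filter_sub_eq_sum_modulusWeight_sub {x : ℕ} {s : Finset ℕ}
    (hs : 0 < ∑ q ∈ s, phiStar x q) (hx : 0 < primePi x) (p : ℕ) :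
    1 / ((∑ q ∈ s, phiStar x q : ℕ) : ℝ) *
        ∑ q ∈ s with ¬ p ∣ q, 1 / (primePiMod x q (p % q) : ℝ) - 1 / (primePi x : ℝ) =
      (∑ q ∈ s, (modulusWeight x q p - phiStar x q / primePi x)) /
        ((∑ q ∈ s, phiStar x q : ℕ) : ℝ) := by
  have hN : (primePi x : ℝ) ≠ 0 := by positivity
  have hF : ((∑ q ∈ s, phiStar x q : ℕ) : ℝ) ≠ 0 := by positivity
  rw [sum_sub_distrib, ← sum_div, ← Nat.cast_sum, sum_filter]
  simp only [modulusWeight, ite_not]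
  field_simp

lemma sum_modulus_bounds_le (x Q : ℕ) {s : Finset ℕ} (hs : ∀ q ∈ s, q ≤ Q) :
    ∑ q ∈ s, (#q.primeFactors * (phiStar x q / primePi x) +
        q.totient / primePi x * (√(q.totient : ℝ) * √(sqDeviation x q)) +
          (q.totient - phiStar x q)) ≤
      (∑ q ∈ s, #q.primeFactors * phiStar x q : ℕ) / primePi x +
        Q / primePi x * (√((∑ q ∈ s, q.totient : ℕ) : ℝ) * √(∑ q ∈ s, sqDeviation x q)) +
          ((∑ q ∈ s, q.totient : ℕ) - (∑ q ∈ s, phiStar x q : ℕ)) := by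
  rw [sum_add_distrib, sum_add_distrib]
  gcongr ?_ + ?_ + ?_
  · simp [sum_div, mul_div_assoc]
  · push_cast
    exact sum_mul_sqrt_mul_sqrt_le s (fun q _ ↦ by positivity)
      (fun q hq ↦ by gcongr; exact_mod_cast (Nat.totient_le q).trans (hs q hq))
      (fun q ↦ Nat.cast_nonneg _) (sqDeviation_nonneg x)
  · push_cast
    rw [sum_sub_distrib]

theorem statDist_le_uncond_general (x Q : ℕ)
    (hF : 0 < ∑ q ∈ Finset.Ioc (Q / 2) Q, phiStar x q) (hπ : 0 < primePi x)
    (X : ℕ → ℝ)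
    (hX : ∀ p ∈ primesUpTo x,
      X p = (1 / ((∑ q ∈ Finset.Ioc (Q / 2) Q, phiStar x q : ℕ) : ℝ)) *
        ∑ q ∈ (Finset.Ioc (Q / 2) Q).filter (fun q => ¬ p ∣ q),
          1 / (primePiMod x q (p % q) : ℝ)) :
    ∑ p ∈ primesUpTo x, |X p - 1 / (primePi x : ℝ)|
      ≤ (1 / (((∑ q ∈ Finset.Ioc (Q / 2) Q, phiStar x q : ℕ) : ℝ) * (primePi x : ℝ))) *
          ((Q : ℝ) * Real.sqrt ((∑ q ∈ Finset.Ioc (Q / 2) Q, q.totient : ℕ) : ℝ) *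
              Real.sqrt (∑ q ∈ Finset.Ioc (Q / 2) Q, ∑ a ∈ residues q,
                ((primePiMod x q a : ℝ) - (primePi x : ℝ) / (q.totient : ℝ)) ^ 2)
            + (((∑ q ∈ Finset.Ioc (Q / 2) Q, q.totient : ℕ) : ℝ)
                - ((∑ q ∈ Finset.Ioc (Q / 2) Q, phiStar x q : ℕ) : ℝ)) * (primePi x : ℝ)
            + ((∑ q ∈ Finset.Ioc (Q / 2) Q, q.primeFactors.card * phiStar x q : ℕ) : ℝ)) := by
  set S := Ioc (Q / 2) Q
  set N : ℝ := (primePi x : ℝ)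
  set Fs : ℝ := ((∑ q ∈ S, phiStar x q : ℕ) : ℝ)
  have hN : 0 < N := Nat.cast_pos.2 hπ
  have hFs : 0 < Fs := Nat.cast_pos.2 hF
  calc ∑ p ∈ primesUpTo x, |X p - 1 / N|
      = (∑ p ∈ primesUpTo x, |∑ q ∈ S, (modulusWeight x q p - phiStar x q / N)|) / Fs := by
        rw [sum_div]
        refine sum_congr rfl fun p hp ↦ ?_
        rw [hX p hp, mul_sum_filter_sub_eq_sum_modulusWeight_sub hF hπ, abs_div,
          abs_of_pos hFs]
    _ ≤ (∑ q ∈ S, ∑ p ∈ primesUpTo x, |modulusWeight x q p - phiStar x q / N|) / Fs := by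
        rw [sum_comm (s := S)]
        gcongr with p
        exact abs_sum_le_sum_abs _ _
    _ ≤ (∑ q ∈ S, (#q.primeFactors * (phiStar x q / N) +
          q.totient / N * (√(q.totient : ℝ) * √(sqDeviation x q)) +
            (q.totient - phiStar x q))) / Fs := by
        gcongr with q hq
        exact sum_abs_modulusWeight_sub_le ((Nat.zero_le _).trans_lt (mem_Ioc.1 hq).1) hπ
    _ ≤ ((∑ q ∈ S, #q.primeFactors * phiStar x q : ℕ) / N +
          Q / N * (√((∑ q ∈ S, q.totient : ℕ) : ℝ) * √(∑ q ∈ S, sqDeviation x q)) +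
            ((∑ q ∈ S, q.totient : ℕ) - Fs)) / Fs := by
        gcongr
        exact sum_modulus_bounds_le x Q fun q hq ↦ (mem_Ioc.1 hq).2
    _ = _ := by
        simp only [sqDeviation]
        field_simp
        ring

/-- Let `x ≥ 2` and `Q` even with `2 ≤ Q < x`. Set
`F(Q) = ∑_{Q/2<q≤Q} φ(q)` and `F*ₓ(Q) = ∑_{Q/2<q≤Q} φ*ₓ(q)`, and assume `F*ₓ(Q) > 0`
and `π(x) > 0`. Let `X` be the distribution on primes `p ≤ x` given by
`Pr[X = p] = (1/F*ₓ(Q))·∑_{Q/2<q≤Q, p∤q} 1/π(x;q,p mod q)`. Then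
`Δ₁(X) ≤ (1/(F*ₓ(Q)·π(x))) · ( Q·√(F(Q))·√(∑_{Q/2<q≤Q} ∑_{a∈(ℤ/qℤ)^*}
(π(x;q,a) − π(x)/φ(q))²) + (F(Q) − F*ₓ(Q))·π(x) + ∑_{Q/2<q≤Q} ω(q)·φ*ₓ(q) )`. -/
theorem statDist_le_uncond (x Q : ℕ) (hx : 2 ≤ x) (hQ : 2 ≤ Q) (hQe : Even Q)
    (hQx : Q < x)
    (hF : 0 < ∑ q ∈ Finset.Ioc (Q / 2) Q, phiStar x q) (hπ : 0 < primePi x)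
    (X : ℕ → ℝ)
    (hX : ∀ p ∈ primesUpTo x,
      X p = (1 / ((∑ q ∈ Finset.Ioc (Q / 2) Q, phiStar x q : ℕ) : ℝ)) *
        ∑ q ∈ (Finset.Ioc (Q / 2) Q).filter (fun q => ¬ p ∣ q),
          1 / (primePiMod x q (p % q) : ℝ)) :
    ∑ p ∈ primesUpTo x, |X p - 1 / (primePi x : ℝ)|
      ≤ (1 / (((∑ q ∈ Finset.Ioc (Q / 2) Q, phiStar x q : ℕ) : ℝ) * (primePi x : ℝ))) *
          ((Q : ℝ) * Real.sqrt ((∑ q ∈ Finset.Ioc (Q / 2) Q, q.totient : ℕ) : ℝ) *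
              Real.sqrt (∑ q ∈ Finset.Ioc (Q / 2) Q, ∑ a ∈ residues q,
                ((primePiMod x q a : ℝ) - (primePi x : ℝ) / (q.totient : ℝ)) ^ 2)
            + (((∑ q ∈ Finset.Ioc (Q / 2) Q, q.totient : ℕ) : ℝ)
                - ((∑ q ∈ Finset.Ioc (Q / 2) Q, phiStar x q : ℕ) : ℝ)) * (primePi x : ℝ)
            + ((∑ q ∈ Finset.Ioc (Q / 2) Q, q.primeFactors.card * phiStar x q : ℕ) : ℝ)) :=
  statDist_le_uncond_general x Q hF hπ X hX
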